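/- arXiv:2001.07007 — 2 statements merged into one kernel-verified Lean document; each statement's English description precedes it below -/
import Mathlib

section
/- Let X and Y be real separated locally convex spaces, let h ∈ Γ(Y), let A : X → Y be a continuous linear operator, let x* ∈ X*, and suppose f := h ∘ A + x* (so f ∈ Γ(X) provided f is proper). Then: (a) f_∞ = h_∞ ∘ A + x* and ker A ⊆ {u : f_∞(u) = ⟨u, x*⟩}; (b) if h_∞ ≥ 0 then x* ∈ ∂f_∞(0) = cl(dom f*); conversely, if x* ∈ cl(dom f*) and A is surjective, then h_∞ ≥ 0; (c) if {y : h_∞(y) ≤ 0} = {0} then ker A = {u : f_∞(u) ≤ ⟨u, x*⟩} and x* ∈ qri cl(dom f*); conversely, if A is surjective and ker A = {u : f_∞(u) ≤ ⟨u, x*⟩}, then {y : h_∞(y) ≤ 0} = {0}; (d) if h is bounded from below then h_∞ ≥ 0 and x* ∈ dom f*; if A is surjective then inf h = −f*(x*), and h is bounded from below if and only if x* ∈ dom f*; (e) if A is surjective, then h attains its infimum on Y if and only if x* ∈ Im ∂f. -/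
open Filter Topology Set Pointwise TopologicalSpace

noncomputable section

section Defs

variable {E : Type*} [AddCommGroup E] [Module ℝ E]

/-- Recession function of `f` based at `x₀ ∈ dom f`, as the supremum of the
(nondecreasing) difference quotients `(f (x₀ + t • u) - f x₀) / t`, `t > 0`. -/
def recAt (f : E → EReal) (x₀ u : E) : EReal :=
  ⨆ t ∈ Set.Ioi (0 : ℝ), ((t⁻¹ : ℝ) : EReal) * (f (x₀ + t • u) - f x₀)

/-- Sublinear function: positively homogeneous and subadditive. -/
def SublinearFn (g : E → EReal) : Prop :=
  g 0 = 0 ∧ (∀ x : E, ∀ t : ℝ, 0 < t → g (t • x) = (t : EReal) * g x) ∧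
    ∀ x y : E, g (x + y) ≤ g x + g y

variable [TopologicalSpace E]

/-- `Γ(E)`: proper lower semicontinuous convex functions. -/
def GammaFn (f : E → EReal) : Prop :=
  (∃ x, f x ≠ ⊤) ∧ (∀ x, f x ≠ ⊥) ∧
    Convex ℝ {p : E × ℝ | f p.1 ≤ (p.2 : EReal)} ∧ LowerSemicontinuous f

/-- Subdifferential at `0`, as a subset of the weak* dual. -/
def subdiff0 (g : E → EReal) : Set (WeakDual ℝ E) :=
  {xs | ∀ x, (xs x : EReal) ≤ g x}

/-- Fenchel conjugate. -/
def conjFn (f : E → EReal) (xs : WeakDual ℝ E) : EReal :=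
  ⨆ x, ((xs x : EReal) - f x)

/-- Domain of the conjugate. -/
def domConj (f : E → EReal) : Set (WeakDual ℝ E) := {xs | conjFn f xs ≠ ⊤}

/-- `xs ∈ ∂f(x)`. -/
def inSubdiff (f : E → EReal) (xs : WeakDual ℝ E) (x : E) : Prop :=
  f x ≠ ⊤ ∧ f x ≠ ⊥ ∧ ∀ x' : E, ((xs x' - xs x : ℝ) : EReal) + f x ≤ f x'

/-- Directionally coercive function. -/
def DirCoercive (f : E → EReal) : Prop :=
  ∀ x : E, ∀ u : E, u ≠ 0 → Filter.Tendsto (fun t : ℝ => f (x + t • u)) Filter.atTop (nhds ⊤)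

/-- The set `L_{x*} = {x | g(x) = ⟨x, x*⟩ and g(-x) = -⟨x, x*⟩}`. -/
def LxSet (g : E → EReal) (xs : WeakDual ℝ E) : Set E :=
  {x | g x = (xs x : EReal) ∧ g (-x) = ((-(xs x) : ℝ) : EReal)}

end Defs

section QRI

variable {F : Type*} [AddCommGroup F] [Module ℝ F] [TopologicalSpace F]

/-- The cone `ℝ₊ (A - a)`. -/
def coneGen (A : Set F) (a : F) : Set F :=
  {x | ∃ t : ℝ, 0 ≤ t ∧ ∃ b ∈ A, x = t • (b - a)}

/-- Quasi-relative interior. -/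
def qri (A : Set F) : Set F :=
  {a ∈ A | ∃ S : Submodule ℝ F, closure (coneGen A a) = (S : Set F)}

/-- Quasi-interior. -/
def qi (A : Set F) : Set F :=
  {a ∈ A | closure (coneGen A a) = Set.univ}

/-- Algebraic core of a set. -/
def coreSet (A : Set F) : Set F :=
  {a : F | ∀ u : F, ∃ δ : ℝ, 0 < δ ∧ ∀ t ∈ Set.Icc (0 : ℝ) δ, a + t • u ∈ A}

end QRI

/-!
Everything rests on two facts. First, the difference quotients of `f = h ∘ A + x*` at `x₀` in
direction `u` are those of `h` at `A x₀` in direction `A u`, shifted by `⟨u, x*⟩`, so that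
`f_∞ = h_∞ ∘ A + x*`. Second, for any `f ∈ Γ(X)` one has `∂f_∞(0) = cl (dom f*)`: each
`z ∈ dom f*` gives an affine minorant `z - f*(z)` of `f`, hence `z ≤ f_∞`; conversely, separating
points from the closed convex epigraph (the Fenchel–Moreau argument) bounds `f_∞` by the support
function of `dom f*`, and since the dual of `X*` with its weak* topology is `X`, Hahn–Banach in `X*`
turns this bound into `∂f_∞(0) ⊆ cl (dom f*)`. When `{h_∞ ≤ 0} = {0}` the sublevel set
`{f_∞ ≤ x*}` is `ker A`, and the same separation shows that the cone generated by
`cl (dom f*) - x*` has closure `(ker A)^⊥`, i.e. `x* ∈ qri (cl (dom f*))`. The statements about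
infima and minimizers follow from `f*(x*) = -inf (h ∘ A)` and from `x* ∈ ∂f(x) ↔ A x ∈ argmin h`.
-/

namespace EReal

lemma coe_le_add_coe_iff {a : EReal} (c : ℝ) : (c : EReal) ≤ a + c ↔ 0 ≤ a := by
  simpa using (addLECancellable_coe c).add_le_add_iff_right (b := 0) (c := a)

lemma add_coe_le_coe_iff {a : EReal} (c : ℝ) : a + c ≤ c ↔ a ≤ 0 := by
  simpa using (addLECancellable_coe c).add_le_add_iff_right (b := a) (c := 0)

lemma iSup_neg {ι : Sort*} (g : ι → EReal) : ⨆ i, -g i = -⨅ i, g i := by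
  refine le_antisymm (iSup_le fun i => neg_le_neg_iff.mpr (iInf_le g i)) ?_
  rw [EReal.neg_le]
  exact le_iInf fun i => EReal.neg_le.mp (le_iSup (fun i => -g i) i)

lemma iSup_add_coe {ι : Sort*} (g : ι → EReal) (c : ℝ) : ⨆ i, (g i + c) = (⨆ i, g i) + c := by
  refine le_antisymm (iSup_le fun i => add_le_add_left (le_iSup g i) _) ?_
  refine add_le_of_le_sub (iSup_le fun i => ?_)
  rw [← add_sub_cancel_right (a := g i) (b := c)]
  exact sub_le_sub (le_iSup (fun i => g i + c) i) le_rfl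

lemma exists_coe_le_iff_iInf_ne_bot {ι : Sort*} (g : ι → EReal) :
    (∃ m : ℝ, ∀ i, (m : EReal) ≤ g i) ↔ ⨅ i, g i ≠ ⊥ := by
  refine ⟨fun ⟨m, hm⟩ => ne_bot_of_le_ne_bot (coe_ne_bot m) (le_iInf hm), fun h => ?_⟩
  exact ⟨(⨅ i, g i).toReal, fun i => (coe_toReal_le h).trans (iInf_le g i)⟩

lemma inv_mul_sub_le_coe_iff {t : ℝ} (ht : 0 < t) (a : EReal) (r s : ℝ) :
    ((t⁻¹ : ℝ) : EReal) * (a - r) ≤ s ↔ a ≤ ((r + t * s : ℝ) : EReal) := by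
  induction a using EReal.rec with
  | bot => simp [coe_mul_bot_of_pos (inv_pos.mpr ht)]
  | coe a =>
    norm_cast
    rw [← le_div_iff₀' (inv_pos.mpr ht)]
    constructor <;> intro h <;> field_simp at h ⊢ <;> linarith
  | top => simp [coe_mul_top_of_pos (inv_pos.mpr ht), -coe_add, -coe_mul]

lemma inv_mul_add_coe_sub_coe {t : ℝ} (ht : 0 < t) (a : EReal) (r c d : ℝ) :
    ((t⁻¹ : ℝ) : EReal) * ((a + ((c + t * d : ℝ) : EReal)) - ((r + c : ℝ) : EReal))
      = ((t⁻¹ : ℝ) : EReal) * (a - r) + d := by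
  induction a using EReal.rec with
  | bot => simp [coe_mul_bot_of_pos (inv_pos.mpr ht)]
  | coe a =>
    norm_cast
    field_simp
    ring
  | top => simp [coe_mul_top_of_pos (inv_pos.mpr ht), -coe_add, -coe_mul]

end EReal

lemma nonpos_of_forall_pos_mul_le {a b : ℝ} (h : ∀ t > 0, t * a ≤ b) : a ≤ 0 := by
  by_contra! ha
  have := h ((|b| + 1) / a) (by positivity)
  rw [div_mul_cancel₀ _ ha.ne'] at this
  linarith [le_abs_self b]

section Recession

variable {E F L : Type*} [AddCommGroup E] [Module ℝ E] [AddCommGroup F] [Module ℝ F]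
  {f : E → EReal} {x₀ : E} {ρ : ℝ}

lemma recAt_le_coe_iff (hρ : f x₀ = ρ) (u : E) (s : ℝ) :
    recAt f x₀ u ≤ s ↔ ∀ t > 0, f (x₀ + t • u) ≤ ((ρ + t * s : ℝ) : EReal) := by
  simp only [recAt, iSup₂_le_iff, mem_Ioi, hρ]
  exact forall₂_congr fun t ht => EReal.inv_mul_sub_le_coe_iff ht _ _ _

lemma recAt_zero (hρ : f x₀ = ρ) : recAt f x₀ 0 = 0 := by
  simp only [recAt, smul_zero, add_zero, hρ,
    EReal.sub_self (EReal.coe_ne_top ρ) (EReal.coe_ne_bot ρ), mul_zero]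
  exact le_antisymm (iSup₂_le fun _ _ => le_rfl)
    (le_iSup₂_of_le (1 : ℝ) (mem_Ioi.mpr one_pos) le_rfl)

lemma recAt_comp_linearMap [FunLike L E F] [LinearMapClass L ℝ E F] (g : F → EReal) (A : L)
    (x₀ u : E) : recAt (fun x => g (A x)) x₀ u = recAt g (A x₀) (A u) := by
  simp only [recAt, map_add, map_smul]

lemma recAt_add_linear [FunLike L E ℝ] [LinearMapClass L ℝ E ℝ] (ℓ : L) (hρ : f x₀ = ρ)
    (u : E) : recAt (fun x => f x + ℓ x) x₀ u = recAt f x₀ u + ℓ u := by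
  simp only [recAt, ← EReal.iSup_add_coe]
  refine iSup_congr fun t => iSup_congr fun ht => ?_
  rw [map_add, map_smul, smul_eq_mul, hρ, ← EReal.coe_add]
  exact EReal.inv_mul_add_coe_sub_coe ht _ _ _ _

lemma coe_le_recAt_of_forall [FunLike L E ℝ] [LinearMapClass L ℝ E ℝ] {ℓ : L} {c : ℝ}
    (hℓ : ∀ x (r : ℝ), f x ≤ r → ℓ x - r ≤ c) (hρ : f x₀ = ρ) (u : E) :
    (ℓ u : EReal) ≤ recAt f x₀ u := by
  by_contra! hlt
  obtain ⟨s, hs, hsu⟩ := EReal.lt_iff_exists_real_btwn.mp hlt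
  have hle := (recAt_le_coe_iff hρ u s).mp hs.le
  have : ℓ u - s ≤ 0 := nonpos_of_forall_pos_mul_le (b := c + ρ - ℓ x₀) fun t ht => by
    have := hℓ _ _ (hle t ht)
    rw [map_add, map_smul, smul_eq_mul] at this
    linarith
  exact (EReal.coe_lt_coe_iff.mp hsu).not_ge (by linarith)

lemma recAt_nonneg_of_forall_coe_le {m : ℝ} (hm : ∀ x, (m : EReal) ≤ f x) (hρ : f x₀ = ρ)
    (u : E) : 0 ≤ recAt f x₀ u := by
  simpa using coe_le_recAt_of_forall (ℓ := (0 : E →ₗ[ℝ] ℝ)) (c := -m)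
    (fun x r hr => by simpa using EReal.coe_le_coe_iff.mp ((hm x).trans hr)) hρ u

end Recession

lemma LowerSemicontinuous.isClosed_realEpigraph {E : Type*} [TopologicalSpace E] {f : E → EReal}
    (hf : LowerSemicontinuous f) : IsClosed {p : E × ℝ | f p.1 ≤ p.2} :=
  hf.isClosed_epigraph.preimage
    (continuous_fst.prodMk (continuous_coe_real_ereal.comp continuous_snd))

section Conjugate

variable {E : Type*} [AddCommGroup E] [Module ℝ E] [TopologicalSpace E] {f : E → EReal}

lemma conjFn_le_coe_iff (hbot : ∀ x, f x ≠ ⊥) {z : WeakDual ℝ E} {c : ℝ} :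
    conjFn f z ≤ c ↔ ∀ x (r : ℝ), f x ≤ r → z x - r ≤ c := by
  refine ⟨fun h x r hr => ?_, fun h => iSup_le fun x => ?_⟩
  · have : ((z x : ℝ) : EReal) - r ≤ c :=
      (EReal.sub_le_sub le_rfl hr).trans ((le_iSup (fun x => (z x : EReal) - f x) x).trans h)
    exact_mod_cast this
  · obtain hx | hx := eq_or_ne (f x) ⊤
    · simp [hx]
    · have hfx := EReal.coe_toReal hx (hbot x)
      rw [← hfx, ← EReal.coe_sub]
      exact_mod_cast h x _ hfx.ge

lemma mem_domConj_iff {z : WeakDual ℝ E} : z ∈ domConj f ↔ ∃ c : ℝ, conjFn f z ≤ c :=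
  ⟨fun h => ⟨_, EReal.le_coe_toReal h⟩,
    fun ⟨c, hc⟩ => ne_top_of_le_ne_top (EReal.coe_ne_top c) hc⟩

lemma convex_domConj (hbot : ∀ x, f x ≠ ⊥) : Convex ℝ (domConj f) := by
  intro z₁ hz₁ z₂ hz₂ a b ha hb hab
  obtain ⟨c₁, hc₁⟩ := mem_domConj_iff.mp hz₁
  obtain ⟨c₂, hc₂⟩ := mem_domConj_iff.mp hz₂
  refine mem_domConj_iff.mpr ⟨a * c₁ + b * c₂, (conjFn_le_coe_iff hbot).mpr fun x r hr => ?_⟩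
  have h₁ := mul_le_mul_of_nonneg_left ((conjFn_le_coe_iff hbot).mp hc₁ x r hr) ha
  have h₂ := mul_le_mul_of_nonneg_left ((conjFn_le_coe_iff hbot).mp hc₂ x r hr) hb
  have hv : (a • z₁ + b • z₂) x = a * z₁ x + b * z₂ x := rfl
  rw [hv, ← one_mul r, ← hab]
  linarith

lemma isClosed_subdiff0 (g : E → EReal) : IsClosed (subdiff0 g) := by
  simp only [subdiff0, ofPred_forall]
  exact isClosed_iInter fun x =>
    isClosed_le (continuous_coe_real_ereal.comp (WeakDual.eval_continuous x)) continuous_const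

lemma domConj_subset_subdiff0_recAt (hbot : ∀ x, f x ≠ ⊥) {x₀ : E} {ρ : ℝ} (hρ : f x₀ = ρ) :
    domConj f ⊆ subdiff0 (recAt f x₀) := fun z hz u => by
  obtain ⟨c, hc⟩ := mem_domConj_iff.mp hz
  exact coe_le_recAt_of_forall ((conjFn_le_coe_iff hbot).mp hc) hρ u

end Conjugate

section WeakDualSeparation

variable {E : Type*} [AddCommGroup E] [Module ℝ E] [TopologicalSpace E]

instance : LocallyConvexSpace ℝ (WeakDual ℝ E) := WeakBilin.locallyConvexSpace

lemma WeakDual.exists_eval_lt_of_notMem {C : Set (WeakDual ℝ E)} (hconv : Convex ℝ C)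
    (hclosed : IsClosed C) {z : WeakDual ℝ E} (hz : z ∉ C) :
    ∃ (v : E) (c : ℝ), (∀ w ∈ C, w v < c) ∧ c < z v := by
  obtain ⟨φ, c, hC, hzc⟩ := geometric_hahn_banach_closed_point hconv hclosed hz
  obtain ⟨v, rfl⟩ := LinearMap.dualEmbedding_surjective (topDualPairing ℝ E) φ
  exact ⟨v, c, hC, hzc⟩

end WeakDualSeparation

section Support

variable {E : Type*} [AddCommGroup E] [Module ℝ E] [TopologicalSpace E]
  [IsTopologicalAddGroup E] [ContinuousSMul ℝ E] [LocallyConvexSpace ℝ E] {f : E → EReal}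

/-- A point strictly below the epigraph is separated from it either by a non-vertical
hyperplane, normalized to slope `-1` in the `ℝ`-direction, or by a vertical one. -/
lemma GammaFn.exists_separation (hf : GammaFn f) {x : E} {μ : ℝ} (hμ : ¬ f x ≤ μ) :
    ∃ (ψ : WeakDual ℝ E) (u : ℝ),
      ((∀ y (r : ℝ), f y ≤ r → ψ y - r < u) ∧ u < ψ x - μ) ∨
        ((∀ y (r : ℝ), f y ≤ r → ψ y < u) ∧ u < ψ x) := by
  obtain ⟨φ, u, hepi, hx⟩ := geometric_hahn_banach_closed_point (x := (x, μ)) hf.2.2.1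
    hf.2.2.2.isClosed_realEpigraph hμ
  set ψ : E →L[ℝ] ℝ := φ.comp (ContinuousLinearMap.inl ℝ E ℝ)
  set β : ℝ := φ (0, 1)
  have hφ : ∀ y r, φ (y, r) = ψ y + r * β := fun y r => by
    rw [show ((y, r) : E × ℝ) = (y, 0) + r • (0, 1) by simp, map_add, map_smul, smul_eq_mul]
    rfl
  simp only [mem_ofPred_eq, hφ] at hepi hx
  obtain ⟨y₁, hy₁⟩ := hf.1
  obtain ⟨r₁, hr₁⟩ : ∃ r : ℝ, f y₁ = r := ⟨_, (EReal.coe_toReal hy₁ (hf.2.1 y₁)).symm⟩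
  have hβ : β ≤ 0 := nonpos_of_forall_pos_mul_le (b := u - ψ y₁ - r₁ * β) fun t ht => by
    have := hepi (y₁, r₁ + t) (hr₁.le.trans (by exact_mod_cast by linarith))
    linarith
  obtain hβ | hβ := hβ.lt_or_eq
  · have hβ' : 0 < -β := neg_pos.mpr hβ
    have hβ0 : β ≠ 0 := hβ.ne
    refine ⟨StrongDual.toWeakDual ((-β)⁻¹ • ψ), u / -β, Or.inl ⟨fun y r hr => ?_, ?_⟩⟩
    · show (-β)⁻¹ * ψ y - r < u / -β
      rw [lt_div_iff₀ hβ', show ((-β)⁻¹ * ψ y - r) * -β = ψ y + r * β by field_simp; ring]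
      exact hepi (y, r) hr
    · show u / -β < (-β)⁻¹ * ψ x - μ
      rwa [div_lt_iff₀ hβ', show ((-β)⁻¹ * ψ x - μ) * -β = ψ x + μ * β by field_simp; ring]
  · refine ⟨StrongDual.toWeakDual ψ, u, Or.inr ⟨fun y r hr => ?_, ?_⟩⟩
    · simpa [hβ] using hepi (y, r) hr
    · simpa [hβ] using hx

lemma GammaFn.exists_conjFn_le_coe (hf : GammaFn f) :
    ∃ (z : WeakDual ℝ E) (c : ℝ), conjFn f z ≤ c := by
  obtain ⟨x₁, hx₁⟩ := hf.1
  obtain ⟨r₁, hr₁⟩ : ∃ r : ℝ, f x₁ = r := ⟨_, (EReal.coe_toReal hx₁ (hf.2.1 x₁)).symm⟩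
  obtain ⟨ψ, u, ⟨hψ, -⟩ | ⟨hψ, hu⟩⟩ := hf.exists_separation (x := x₁) (μ := r₁ - 1)
    (by rw [hr₁, EReal.coe_le_coe_iff]; linarith)
  · exact ⟨ψ, u, (conjFn_le_coe_iff hf.2.1).mpr fun y r hr => (hψ y r hr).le⟩
  · exact absurd (hψ x₁ r₁ hr₁.le) hu.not_gt

lemma GammaFn.exists_lt_sub_conjFn (hf : GammaFn f) {x : E} {μ : ℝ} (hμ : (μ : EReal) < f x) :
    ∃ (z : WeakDual ℝ E) (c : ℝ), conjFn f z ≤ c ∧ μ < z x - c := by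
  obtain ⟨ψ, u, ⟨hψ, hu⟩ | ⟨hψ, hu⟩⟩ := hf.exists_separation hμ.not_ge
  · exact ⟨ψ, u, (conjFn_le_coe_iff hf.2.1).mpr fun y r hr => (hψ y r hr).le, by linarith⟩
  -- a vertical separator `ψ` tilts any affine minorant of `f` until it passes above `(x, μ)`
  obtain ⟨z₀, c₀, hz₀⟩ := hf.exists_conjFn_le_coe
  obtain ⟨n, hn⟩ := exists_nat_gt ((μ - z₀ x + c₀) / (ψ x - u))
  rw [div_lt_iff₀ (sub_pos.mpr hu)] at hn
  refine ⟨z₀ + (n : ℝ) • ψ, c₀ + n * u, (conjFn_le_coe_iff hf.2.1).mpr fun y r hr => ?_, ?_⟩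
  · have h₀ := (conjFn_le_coe_iff hf.2.1).mp hz₀ y r hr
    have h₁ := mul_le_mul_of_nonneg_left (hψ y r hr).le (Nat.cast_nonneg (α := ℝ) n)
    show z₀ y + n * ψ y - r ≤ c₀ + n * u
    linarith
  · show μ < z₀ x + n * ψ x - (c₀ + n * u)
    linarith

lemma GammaFn.recAt_le_iSup_domConj (hf : GammaFn f) {x₀ : E} {ρ : ℝ} (hρ : f x₀ = ρ) (u : E) :
    recAt f x₀ u ≤ ⨆ z ∈ domConj f, (z u : EReal) := by
  by_contra! hlt
  obtain ⟨s, hs, hsu⟩ := EReal.lt_iff_exists_real_btwn.mp hlt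
  refine hsu.not_ge ((recAt_le_coe_iff hρ u s).mpr fun t ht => ?_)
  by_contra! hlt'
  obtain ⟨z, c, hc, hzc⟩ := hf.exists_lt_sub_conjFn hlt'
  have hzs : z u ≤ s := by
    have := le_iSup₂ (f := fun z (_ : z ∈ domConj f) => (z u : EReal)) z
      (mem_domConj_iff.mpr ⟨c, hc⟩)
    exact_mod_cast this.trans hs.le
  have hx₀ : z x₀ - ρ ≤ c := (conjFn_le_coe_iff hf.2.1).mp hc x₀ ρ hρ.le
  rw [map_add, map_smul, smul_eq_mul] at hzc
  nlinarith [mul_le_mul_of_nonneg_left hzs ht.le]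

theorem GammaFn.subdiff0_recAt_eq_closure_domConj (hf : GammaFn f) {x₀ : E} {ρ : ℝ}
    (hρ : f x₀ = ρ) : subdiff0 (recAt f x₀) = closure (domConj f) := by
  refine subset_antisymm (fun z hz => ?_)
    (closure_minimal (domConj_subset_subdiff0_recAt hf.2.1 hρ) (isClosed_subdiff0 _))
  by_contra hcl
  obtain ⟨v, c, hC, hzc⟩ := WeakDual.exists_eval_lt_of_notMem (convex_domConj hf.2.1).closure
    isClosed_closure hcl
  have hv : recAt f x₀ v ≤ c := (hf.recAt_le_iSup_domConj hρ v).trans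
    (iSup₂_le fun w hw => by exact_mod_cast (hC w (subset_closure hw)).le)
  exact hzc.not_ge (by exact_mod_cast (hz v).trans hv)

end Support

lemma convex_coneGen {E : Type*} [AddCommGroup E] [Module ℝ E] {A : Set E} (hA : Convex ℝ A)
    (a : E) : Convex ℝ (coneGen A a) := by
  rintro _ ⟨s, hs, b, hb, rfl⟩ _ ⟨t, ht, c, hc, rfl⟩ θ η hθ hη hθη
  obtain hτ | hτ := (add_nonneg (mul_nonneg hθ hs) (mul_nonneg hη ht)).eq_or_lt
  · have h₁ : θ * s = 0 := by nlinarith [mul_nonneg hθ hs, mul_nonneg hη ht]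
    have h₂ : η * t = 0 := by nlinarith [mul_nonneg hθ hs, mul_nonneg hη ht]
    refine ⟨0, le_rfl, b, hb, ?_⟩
    simp only [smul_smul, h₁, h₂, zero_smul, add_zero]
  · refine ⟨θ * s + η * t, hτ.le, (θ * s / (θ * s + η * t)) • b + (η * t / (θ * s + η * t)) • c,
      hA hb hc (by positivity) (by positivity) (by field_simp), ?_⟩
    simp only [smul_sub, smul_add, smul_smul, mul_div_cancel₀ _ hτ.ne']
    module

section QuasiRelativeInterior

variable {E : Type*} [AddCommGroup E] [Module ℝ E] [TopologicalSpace E]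

def weakDualAnnihilator (V : Submodule ℝ E) : Submodule ℝ (WeakDual ℝ E) :=
  V.dualAnnihilator.comap (ContinuousLinearMap.coeLM ℝ ∘ₗ WeakDual.toStrongDual.toLinearMap)

lemma mem_weakDualAnnihilator {V : Submodule ℝ E} {z : WeakDual ℝ E} :
    z ∈ weakDualAnnihilator V ↔ ∀ u ∈ V, z u = 0 :=
  Submodule.mem_dualAnnihilator _

lemma isClosed_weakDualAnnihilator (V : Submodule ℝ E) :
    IsClosed (weakDualAnnihilator V : Set (WeakDual ℝ E)) := by
  have : (weakDualAnnihilator V : Set (WeakDual ℝ E)) = ⋂ u ∈ V, {z | z u = 0} := by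
    ext z
    simp [mem_weakDualAnnihilator]
  rw [this]
  exact isClosed_biInter fun u _ => isClosed_eq (WeakDual.eval_continuous u) continuous_const

variable [IsTopologicalAddGroup E] [ContinuousSMul ℝ E] [LocallyConvexSpace ℝ E] {f : E → EReal}

/-- The closure of the cone generated by `cl (dom f*) - x*` is the annihilator of `V`. -/
theorem GammaFn.mem_qri_closure_domConj (hf : GammaFn f) {x₀ : E} {ρ : ℝ} (hρ : f x₀ = ρ)
    {xs : WeakDual ℝ E} (hxs : xs ∈ closure (domConj f)) (V : Submodule ℝ E)
    (hV : {u | recAt f x₀ u ≤ xs u} = V) : xs ∈ qri (closure (domConj f)) := by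
  have hmemV : ∀ u, u ∈ V ↔ recAt f x₀ u ≤ xs u := fun u => by
    rw [← SetLike.mem_coe, ← hV]
    rfl
  refine ⟨hxs, weakDualAnnihilator V, subset_antisymm ?_ ?_⟩
  · refine closure_minimal ?_ (isClosed_weakDualAnnihilator V)
    rintro _ ⟨t, -, b, hb, rfl⟩
    rw [← hf.subdiff0_recAt_eq_closure_domConj hρ] at hb
    have hle : ∀ v ∈ V, b v ≤ xs v := fun v hv => by
      exact_mod_cast (hb v).trans ((hmemV v).mp hv)
    refine mem_weakDualAnnihilator.mpr fun u hu => ?_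
    have h₁ := hle u hu
    have h₂ := hle (-u) (V.neg_mem hu)
    rw [map_neg, map_neg] at h₂
    show t * (b u - xs u) = 0
    rw [le_antisymm h₁ (by linarith), sub_self, mul_zero]
  · intro z hz
    by_contra hcl
    obtain ⟨v, c, hC, hzc⟩ := WeakDual.exists_eval_lt_of_notMem
      (convex_coneGen (convex_domConj hf.2.1).closure xs).closure isClosed_closure hcl
    have hc : 0 < c := hC 0 (subset_closure ⟨0, le_rfl, xs, hxs, (zero_smul ℝ _).symm⟩)
    have hle : ∀ b ∈ closure (domConj f), b v ≤ xs v := fun b hb => by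
      by_contra! hbv
      have hd : 0 < b v - xs v := sub_pos.mpr hbv
      have := hC _ (subset_closure ⟨c / (b v - xs v), by positivity, b, hb, rfl⟩)
      exact this.ne (div_mul_cancel₀ c hd.ne')
    have hv : v ∈ V := (hmemV v).mpr ((hf.recAt_le_iSup_domConj hρ v).trans
      (iSup₂_le fun b hb => by exact_mod_cast hle b (subset_closure hb)))
    linarith [mem_weakDualAnnihilator.mp hz v hv]

end QuasiRelativeInterior

section Composition

variable {X Y : Type*} [AddCommGroup X] [Module ℝ X] [TopologicalSpace X]
  [AddCommGroup Y] [Module ℝ Y] [TopologicalSpace Y] {h : Y → EReal}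
  (A : X →L[ℝ] Y) (xs : WeakDual ℝ X)

lemma GammaFn.comp_add (hh : GammaFn h) {x₀ : X} (hx₀ : h (A x₀) ≠ ⊤) :
    GammaFn fun x => h (A x) + xs x := by
  refine ⟨⟨x₀, EReal.add_ne_top hx₀ (EReal.coe_ne_top _)⟩,
    fun x => EReal.add_ne_bot_iff.mpr ⟨hh.2.1 _, EReal.coe_ne_bot _⟩, ?_, ?_⟩
  · have hepi : {p : X × ℝ | h (A p.1) + xs p.1 ≤ p.2}
        = (fun p : X × ℝ => (A p.1, p.2 - xs p.1)) ⁻¹' {q : Y × ℝ | h q.1 ≤ q.2} := by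
      ext p
      simp only [mem_ofPred_eq, mem_preimage, EReal.coe_sub]
      exact (EReal.le_sub_iff_add_le (.inl (EReal.coe_ne_bot _)) (.inl (EReal.coe_ne_top _))).symm
    rw [hepi]
    refine hh.2.2.1.is_linear_preimage ⟨fun p q => ?_, fun c p => ?_⟩ <;>
      simp only [Prod.fst_add, Prod.snd_add, Prod.smul_fst, Prod.smul_snd, map_add, map_smul,
        Prod.mk_add_mk, Prod.smul_mk, smul_eq_mul] <;> congr 1 <;> ring
  · exact (hh.2.2.2.comp A.continuous).add'
      (continuous_coe_real_ereal.comp (map_continuous xs)).lowerSemicontinuous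
      fun x => EReal.continuousAt_add (.inr (EReal.coe_ne_bot _)) (.inr (EReal.coe_ne_top _))

lemma recAt_comp_add {x₀ : X} {ρ : ℝ} (hρ : h (A x₀) = ρ) (u : X) :
    recAt (fun x => h (A x) + xs x) x₀ u = recAt h (A x₀) (A u) + xs u := by
  rw [recAt_add_linear (f := fun x => h (A x)) xs hρ, recAt_comp_linearMap h A]

lemma coe_le_recAt_comp_add_iff {x₀ : X} {ρ : ℝ} (hρ : h (A x₀) = ρ) (u : X) :
    (xs u : EReal) ≤ recAt (fun x => h (A x) + xs x) x₀ u ↔ 0 ≤ recAt h (A x₀) (A u) := by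
  rw [recAt_comp_add A xs hρ]
  exact EReal.coe_le_add_coe_iff _

lemma recAt_comp_add_le_coe_iff {x₀ : X} {ρ : ℝ} (hρ : h (A x₀) = ρ) (u : X) :
    recAt (fun x => h (A x) + xs x) x₀ u ≤ xs u ↔ recAt h (A x₀) (A u) ≤ 0 := by
  rw [recAt_comp_add A xs hρ]
  exact EReal.add_coe_le_coe_iff _

lemma conjFn_comp_add_self : conjFn (fun x => h (A x) + xs x) xs = -⨅ x, h (A x) := by
  simp only [conjFn, EReal.sub_add_cancel_right, EReal.iSup_neg]

lemma conjFn_comp_add_self_ne_top_iff :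
    conjFn (fun x => h (A x) + xs x) xs ≠ ⊤ ↔ ∃ m : ℝ, ∀ x, (m : EReal) ≤ h (A x) := by
  rw [conjFn_comp_add_self, ne_eq, EReal.neg_eq_top_iff, EReal.exists_coe_le_iff_iInf_ne_bot]

lemma inSubdiff_comp_add_self_iff (hbot : ∀ y, h y ≠ ⊥) (x : X) :
    inSubdiff (fun x => h (A x) + xs x) xs x ↔ h (A x) ≠ ⊤ ∧ ∀ x', h (A x) ≤ h (A x') := by
  have hshift : ∀ x', ((xs x' - xs x : ℝ) : EReal) + (h (A x) + xs x) = h (A x) + xs x' :=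
    fun x' => by rw [add_left_comm, ← EReal.coe_add, sub_add_cancel]
  have hcancel : ∀ x', h (A x) + xs x' ≤ h (A x') + xs x' ↔ h (A x) ≤ h (A x') := fun x' =>
    (EReal.addLECancellable_coe _).add_le_add_iff_right
  simp only [inSubdiff, hshift, hcancel,
    EReal.add_ne_top_iff_ne_top_left (EReal.coe_ne_bot _) (EReal.coe_ne_top _),
    EReal.add_ne_bot_iff.mpr ⟨hbot (A x), EReal.coe_ne_bot _⟩, ne_eq, not_false_eq_true, true_and]

lemma exists_forall_le_iff_exists_inSubdiff (hh : GammaFn h) (hA : Function.Surjective A) :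
    (∃ y₀, ∀ y, h y₀ ≤ h y) ↔ ∃ x, inSubdiff (fun x => h (A x) + xs x) xs x := by
  simp only [inSubdiff_comp_add_self_iff A xs hh.2.1]
  constructor
  · rintro ⟨y₀, hy₀⟩
    obtain ⟨x, rfl⟩ := hA y₀
    obtain ⟨y₁, hy₁⟩ := hh.1
    exact ⟨x, ne_top_of_le_ne_top hy₁ (hy₀ y₁), fun x' => hy₀ _⟩
  · rintro ⟨x, -, hx⟩
    exact ⟨A x, hA.forall.mpr hx⟩

variable [IsTopologicalAddGroup X] [ContinuousSMul ℝ X] [LocallyConvexSpace ℝ X]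

theorem GammaFn.ker_eq_and_mem_qri_of_recAt_nonpos (hh : GammaFn h) {x₀ : X} {ρ : ℝ}
    (hρ : h (A x₀) = ρ) (hzero : {y | recAt h (A x₀) y ≤ 0} = {0}) :
    {u | A u = 0} = {u | recAt (fun x => h (A x) + xs x) x₀ u ≤ xs u} ∧
      xs ∈ qri (closure (domConj fun x => h (A x) + xs x)) := by
  have hz : ∀ y, recAt h (A x₀) y ≤ 0 ↔ y = 0 := fun y => Set.ext_iff.mp hzero y
  have hker : {u | A u = 0} = {u | recAt (fun x => h (A x) + xs x) x₀ u ≤ xs u} := by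
    ext u
    exact ((recAt_comp_add_le_coe_iff A xs hρ u).trans (hz _)).symm
  have hpos : ∀ y, 0 ≤ recAt h (A x₀) y := fun y =>
    (le_total 0 _).elim id fun hy => by rw [(hz y).mp hy, recAt_zero hρ]
  have hfx₀ : h (A x₀) + xs x₀ = ((ρ + xs x₀ : ℝ) : EReal) := by rw [hρ, EReal.coe_add]
  have hf := hh.comp_add A xs (hρ ▸ EReal.coe_ne_top ρ)
  refine ⟨hker, hf.mem_qri_closure_domConj hfx₀ ?_ (LinearMap.ker (A : X →ₗ[ℝ] Y)) hker.symm⟩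
  rw [← hf.subdiff0_recAt_eq_closure_domConj hfx₀]
  exact fun u => (coe_le_recAt_comp_add_iff A xs hρ u).mpr (hpos _)

end Composition

variable {X : Type*} {Y : Type*}

theorem stmt13_general [AddCommGroup X] [Module ℝ X] [TopologicalSpace X] [IsTopologicalAddGroup X]
    [ContinuousSMul ℝ X] [LocallyConvexSpace ℝ X]
    [AddCommGroup Y] [Module ℝ Y] [TopologicalSpace Y]
    (h : Y → EReal) (hh : GammaFn h) (A : X →L[ℝ] Y) (xs : WeakDual ℝ X)
    (f : X → EReal) (hfdef : ∀ x : X, f x = h (A x) + ((xs x : ℝ) : EReal))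
    (x₀ : X) (hx₀ : f x₀ ≠ ⊤) :
    -- (a)
    ((∀ u : X, recAt f x₀ u = recAt h (A x₀) (A u) + ((xs u : ℝ) : EReal)) ∧
      ∀ u : X, A u = 0 → recAt f x₀ u = ((xs u : ℝ) : EReal)) ∧
    -- (b)
    (((∀ y : Y, 0 ≤ recAt h (A x₀) y) →
        xs ∈ subdiff0 (recAt f x₀) ∧ subdiff0 (recAt f x₀) = closure (domConj f)) ∧
      ((xs ∈ closure (domConj f) ∧ Function.Surjective A) →
        ∀ y : Y, 0 ≤ recAt h (A x₀) y)) ∧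
    -- (c)
    (({y : Y | recAt h (A x₀) y ≤ 0} = {0} →
        {u : X | A u = 0} = {u : X | recAt f x₀ u ≤ ((xs u : ℝ) : EReal)} ∧
          xs ∈ qri (closure (domConj f))) ∧
      ((Function.Surjective A ∧
          {u : X | A u = 0} = {u : X | recAt f x₀ u ≤ ((xs u : ℝ) : EReal)}) →
        {y : Y | recAt h (A x₀) y ≤ 0} = {0})) ∧
    -- (d)
    (((∃ m : ℝ, ∀ y : Y, (m : EReal) ≤ h y) →
        (∀ y : Y, 0 ≤ recAt h (A x₀) y) ∧ conjFn f xs ≠ ⊤) ∧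
      (Function.Surjective A →
        (⨅ y : Y, h y) = -(conjFn f xs) ∧
          ((∃ m : ℝ, ∀ y : Y, (m : EReal) ≤ h y) ↔ conjFn f xs ≠ ⊤))) ∧
    -- (e)
    (Function.Surjective A →
      ((∃ y₀ : Y, ∀ y : Y, h y₀ ≤ h y) ↔ ∃ x : X, inSubdiff f xs x)) := by
  obtain rfl : f = fun x => h (A x) + xs x := funext hfdef
  obtain ⟨ρ, hρ⟩ : ∃ ρ : ℝ, h (A x₀) = ρ :=
    ⟨_, (EReal.coe_toReal (fun htop => hx₀ (by simp [htop])) (hh.2.1 _)).symm⟩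
  have hsub := (hh.comp_add A xs (hρ ▸ EReal.coe_ne_top ρ)).subdiff0_recAt_eq_closure_domConj
    (ρ := ρ + xs x₀) (by rw [hρ, EReal.coe_add])
  refine ⟨⟨recAt_comp_add A xs hρ, fun u hu => ?_⟩, ⟨fun hpos => ⟨?_, hsub⟩, ?_⟩,
    ⟨hh.ker_eq_and_mem_qri_of_recAt_nonpos A xs hρ, ?_⟩, ⟨?_, fun hA => ?_⟩,
    exists_forall_le_iff_exists_inSubdiff A xs hh⟩
  · rw [recAt_comp_add A xs hρ, hu, recAt_zero hρ, zero_add]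
  · exact fun u => (coe_le_recAt_comp_add_iff A xs hρ u).mpr (hpos _)
  · rintro ⟨hxs, hA⟩
    exact hA.forall.mpr fun u => (coe_le_recAt_comp_add_iff A xs hρ u).mp ((hsub ▸ hxs) u)
  · rintro ⟨hA, hker⟩
    ext y
    obtain ⟨u, rfl⟩ := hA y
    refine ⟨fun hy => (Set.ext_iff.mp hker u).mpr ((recAt_comp_add_le_coe_iff A xs hρ u).mpr hy),
      fun hy => ?_⟩
    rw [mem_singleton_iff.mp hy, mem_ofPred_eq, recAt_zero hρ]
  · rintro ⟨m, hm⟩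
    exact ⟨recAt_nonneg_of_forall_coe_le hm hρ,
      (conjFn_comp_add_self_ne_top_iff A xs).mpr ⟨m, fun x => hm _⟩⟩
  · rw [conjFn_comp_add_self_ne_top_iff, conjFn_comp_add_self, hA.iInf_comp h, neg_neg]
    exact ⟨rfl, by simp only [hA.forall]⟩

theorem stmt13 [AddCommGroup X] [Module ℝ X] [TopologicalSpace X] [IsTopologicalAddGroup X]
    [ContinuousSMul ℝ X] [LocallyConvexSpace ℝ X] [T2Space X]
    [AddCommGroup Y] [Module ℝ Y] [TopologicalSpace Y] [IsTopologicalAddGroup Y]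
    [ContinuousSMul ℝ Y] [LocallyConvexSpace ℝ Y] [T2Space Y]
    (h : Y → EReal) (hh : GammaFn h) (A : X →L[ℝ] Y) (xs : WeakDual ℝ X)
    (f : X → EReal) (hfdef : ∀ x : X, f x = h (A x) + ((xs x : ℝ) : EReal))
    (x₀ : X) (hx₀ : f x₀ ≠ ⊤) :
    -- (a)
    ((∀ u : X, recAt f x₀ u = recAt h (A x₀) (A u) + ((xs u : ℝ) : EReal)) ∧
      ∀ u : X, A u = 0 → recAt f x₀ u = ((xs u : ℝ) : EReal)) ∧
    -- (b)
    (((∀ y : Y, 0 ≤ recAt h (A x₀) y) →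
        xs ∈ subdiff0 (recAt f x₀) ∧ subdiff0 (recAt f x₀) = closure (domConj f)) ∧
      ((xs ∈ closure (domConj f) ∧ Function.Surjective A) →
        ∀ y : Y, 0 ≤ recAt h (A x₀) y)) ∧
    -- (c)
    (({y : Y | recAt h (A x₀) y ≤ 0} = {0} →
        {u : X | A u = 0} = {u : X | recAt f x₀ u ≤ ((xs u : ℝ) : EReal)} ∧
          xs ∈ qri (closure (domConj f))) ∧
      ((Function.Surjective A ∧
          {u : X | A u = 0} = {u : X | recAt f x₀ u ≤ ((xs u : ℝ) : EReal)}) →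
        {y : Y | recAt h (A x₀) y ≤ 0} = {0})) ∧
    -- (d)
    (((∃ m : ℝ, ∀ y : Y, (m : EReal) ≤ h y) →
        (∀ y : Y, 0 ≤ recAt h (A x₀) y) ∧ conjFn f xs ≠ ⊤) ∧
      (Function.Surjective A →
        (⨅ y : Y, h y) = -(conjFn f xs) ∧
          ((∃ m : ℝ, ∀ y : Y, (m : EReal) ≤ h y) ↔ conjFn f xs ≠ ⊤))) ∧
    -- (e)
    (Function.Surjective A →
      ((∃ y₀ : Y, ∀ y : Y, h y₀ ≤ h y) ↔ ∃ x : X, inSubdiff f xs x)) :=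
  stmt13_general h hh A xs f hfdef x₀ hx₀
end
end

section
/- Let (X, ⟨·,·⟩) be a real Hilbert space (X* identified with X via the Riesz theorem) and let f ∈ Γ(X) satisfy qri cl(dom f*) ≠ ∅. Then there exist a unique closed linear subspace Y of X, a unique essentially directionally coercive function c ∈ Γ(Z) with Z := Y^⊥, and a unique v ∈ Y such that f = c ∘ Pr_Z + ⟨·, v⟩, where Pr_Z is the orthogonal projection of X onto Z. More precisely, Y = L_f, c = f|_Z, and v = Pr_Y(x*) for some (any) x* ∈ cl(dom f*), where Pr_Y = I − Pr_Z. -/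
/-!
Let `L := (dom f* - dom f*)ᗮ`. Since `f ∈ Γ(X)` is the supremum of its affine minorants
`⟪·, y⟫ - β` with `y ∈ dom f*`, and `⟪u, ·⟫` is constant on `dom f*` for `u ∈ L`, we get
`f (x + u) = f x + ⟪u, ys⟫` for `u ∈ L`: `f` is affine along `L`. This gives the decomposition
with `c = f|_{Lᗮ}` and `v = Pr_L ys`, and, through the recession function, `L = L_f`.
For `q ∈ qri cl(dom f*)` and `0 ≠ u ∈ Lᗮ` there is `y ∈ dom f*` with `⟪u, q⟫ < ⟪u, y⟫`, which makes
`c - ⟪·, Pr_{Lᗮ} q⟫` directionally coercive. Conversely, for any decomposition `(Y, c, v)`, `f` is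
affine along `Y`, so `Y ⊆ L`; and `f` is affine along no nonzero direction of `Yᗮ`, because
`c - ⟪·, w⟫` cannot tend to `+∞` at both ends of a line on which it is affine, so `L ⊆ Y`.
-/

open Filter Topology Set Pointwise TopologicalSpace

noncomputable section

section Hilbert

open RealInnerProductSpace

variable {X : Type*} [NormedAddCommGroup X] [InnerProductSpace ℝ X] [CompleteSpace X]

/-- Fenchel conjugate in a Hilbert space (dual identified with the space via Riesz). -/
def hConj (f : X → EReal) (y : X) : EReal :=
  ⨆ x : X, ((⟪x, y⟫ : ℝ) : EReal) - f x

/-- Domain of the Hilbert-space conjugate. -/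
def hDomConj (f : X → EReal) : Set X := {y | hConj f y ≠ ⊤}

/-- The set `L_f` (computed from `y ∈ cl (dom f*)` and a base point `x₀ ∈ dom f`). -/
def hLSet (f : X → EReal) (x₀ y : X) : Set X :=
  {u | recAt f x₀ u = ((⟪u, y⟫ : ℝ) : EReal) ∧
       recAt f x₀ (-u) = ((-⟪u, y⟫ : ℝ) : EReal)}

/-- A valid triple `(Y, c, v)` in the decomposition `f = c ∘ Pr_Z + ⟨·, v⟩`, `Z := Yᗮ`:
`Y` is a closed linear subspace, `c ∈ Γ(Z)` is essentially directionally coercive, `v ∈ Y`,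
every `x` decomposes as `x = (x - z) + z` with `x - z ∈ Y`, `z ∈ Z`, and on such a
decomposition `f x = c z + ⟪x, v⟫`. -/
def GoodTriple (f : X → EReal) (Y : Submodule ℝ X) (c : ↥(Yᗮ) → EReal) (v : X) : Prop :=
  IsClosed (Y : Set X) ∧ GammaFn c ∧
  (∃ w : ↥(Yᗮ), DirCoercive (fun z : ↥(Yᗮ) => c z - ((⟪z, w⟫ : ℝ) : EReal))) ∧
  v ∈ Y ∧
  (∀ x : X, ∃ z : ↥(Yᗮ), x - (z : X) ∈ Y) ∧
  (∀ x : X, ∀ z : ↥(Yᗮ), x - (z : X) ∈ Y → f x = c z + ((⟪x, v⟫ : ℝ) : EReal))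

end Hilbert

lemma EReal.not_tendsto_top_of_add_mul_of_sub_mul (a b : ℝ)
    (h₁ : Tendsto (fun t : ℝ => ((a + t * b : ℝ) : EReal)) atTop (𝓝 ⊤))
    (h₂ : Tendsto (fun t : ℝ => ((a - t * b : ℝ) : EReal)) atTop (𝓝 ⊤)) : False := by
  rw [EReal.tendsto_coe_nhds_top_iff] at h₁ h₂
  have hsum := h₁.atTop_add_atTop h₂
  simp only [add_add_sub_cancel] at hsum
  exact not_tendsto_const_atTop _ _ hsum

lemma EReal.tendsto_top_of_coe_add_mul_le {g : ℝ → EReal} {a b : ℝ} (hb : 0 < b)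
    (h : ∀ᶠ t in atTop, ((a + t * b : ℝ) : EReal) ≤ g t) : Tendsto g atTop (𝓝 ⊤) := by
  refine tendsto_nhds_top_mono ?_ h
  rw [EReal.tendsto_coe_nhds_top_iff]
  exact tendsto_atTop_add_const_left _ a (tendsto_id.atTop_mul_const hb)

lemma EReal.coe_div_le_of_forall_le {e : EReal} {s l c : ℝ} (hc : 0 < c)
    (h : ∀ t : ℝ, e ≤ t → s ≤ l + t * c) : (((s - l) / c : ℝ) : EReal) ≤ e := by
  rw [← EReal.le_of_forall_lt_iff_le]
  intro t ht
  have := h t ht.le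
  rw [EReal.coe_le_coe_iff, div_le_iff₀ hc]
  linarith

lemma LowerSemicontinuous.isClosed_epigraph_real {E : Type*} [TopologicalSpace E]
    {f : E → EReal} (hf : LowerSemicontinuous f) :
    IsClosed {p : E × ℝ | f p.1 ≤ (p.2 : EReal)} :=
  hf.isClosed_epigraph.preimage
    (continuous_fst.prodMk (continuous_coe_real_ereal.comp continuous_snd))

lemma GammaFn.comp_subtype {E : Type*} [AddCommGroup E] [Module ℝ E] [TopologicalSpace E]
    {f : E → EReal} (hf : GammaFn f) (K : Submodule ℝ E) (hK : ∃ z : K, f z ≠ ⊤) :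
    GammaFn (fun z : K => f z) :=
  ⟨hK, fun z => hf.2.1 z, hf.2.2.1.linear_preimage (K.subtype.prodMap LinearMap.id),
    hf.2.2.2.comp continuous_subtype_val⟩

section RecessionFunction

variable {E : Type*} [AddCommGroup E] [Module ℝ E]

lemma le_recAt (f : E → EReal) (x₀ u : E) {t : ℝ} (ht : 0 < t) :
    ((t⁻¹ : ℝ) : EReal) * (f (x₀ + t • u) - f x₀) ≤ recAt f x₀ u :=
  le_iSup₂ (f := fun (t : ℝ) (_ : t ∈ Ioi 0) => ((t⁻¹ : ℝ) : EReal) * (f (x₀ + t • u) - f x₀))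
    t ht

lemma recAt_eq_of_apply_smul_add {f : E → EReal} {x₀ u : E} {a κ : ℝ} (h₀ : f x₀ = a)
    (h : ∀ t : ℝ, 0 < t → f (x₀ + t • u) = ((a + t * κ : ℝ) : EReal)) :
    recAt f x₀ u = κ := by
  have hquot : ∀ t ∈ Ioi (0 : ℝ), ((t⁻¹ : ℝ) : EReal) * (f (x₀ + t • u) - f x₀) = κ := by
    intro t ht
    rw [h t ht, h₀, ← EReal.coe_sub, ← EReal.coe_mul, add_sub_cancel_left,
      inv_mul_cancel_left₀ (ne_of_gt ht)]
  unfold recAt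
  rw [iSup_congr fun t => iSup_congr fun ht => hquot t ht, biSup_const nonempty_Ioi]

lemma recAt_eq_and_recAt_neg_eq_of_apply_smul_add {f : E → EReal} {x₀ u : E} {a κ : ℝ}
    (h₀ : f x₀ = a) (h : ∀ t : ℝ, f (x₀ + t • u) = ((a + t * κ : ℝ) : EReal)) :
    recAt f x₀ u = κ ∧ recAt f x₀ (-u) = ((-κ : ℝ) : EReal) := by
  refine ⟨recAt_eq_of_apply_smul_add h₀ fun t _ => h t, recAt_eq_of_apply_smul_add h₀ fun t _ => ?_⟩
  rw [smul_neg, ← neg_smul, h, neg_mul_comm]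

end RecessionFunction

section InnerProductSpace

open RealInnerProductSpace

variable {X : Type*} [NormedAddCommGroup X] [InnerProductSpace ℝ X] {f : X → EReal}

lemma hConj_le_coe_iff {y : X} {β : ℝ} :
    hConj f y ≤ β ↔ ∀ p, ((⟪p, y⟫ - β : ℝ) : EReal) ≤ f p := by
  unfold hConj
  rw [iSup_le_iff]
  refine forall_congr' fun p => ?_
  induction f p using EReal.rec with
  | bot => simp [-EReal.coe_sub]
  | top => simp
  | coe m =>
    rw [← EReal.coe_sub, EReal.coe_le_coe_iff, EReal.coe_le_coe_iff]
    constructor <;> intro <;> linarith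

lemma mem_hDomConj_iff {y : X} :
    y ∈ hDomConj f ↔ ∃ β : ℝ, ∀ p, ((⟪p, y⟫ - β : ℝ) : EReal) ≤ f p := by
  simp_rw [← hConj_le_coe_iff]
  refine ⟨fun hy => ?_, fun ⟨β, hβ⟩ => ne_top_of_le_ne_top (EReal.coe_ne_top β) hβ⟩
  obtain ⟨β, hβ, -⟩ := EReal.lt_iff_exists_real_btwn.mp (lt_top_iff_ne_top.mpr hy)
  exact ⟨β, hβ.le⟩

lemma inner_le_recAt {y : X} {β : ℝ}
    (hmin : ∀ p, ((⟪p, y⟫ - β : ℝ) : EReal) ≤ f p) {x₀ : X} {a : ℝ} (h₀ : f x₀ = a) (u : X) :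
    ((⟪u, y⟫ : ℝ) : EReal) ≤ recAt f x₀ u := by
  set C := ⟪x₀, y⟫ - β - a
  have hlim : Tendsto (fun t : ℝ => ((⟪u, y⟫ + C / t : ℝ) : EReal)) atTop (𝓝 ⟪u, y⟫) := by
    have h : Tendsto (fun t : ℝ => ⟪u, y⟫ + C / t) atTop (𝓝 (⟪u, y⟫ + 0)) :=
      tendsto_const_nhds.add (tendsto_const_nhds.div_atTop tendsto_id)
    rw [add_zero] at h
    exact continuous_coe_real_ereal.continuousAt.tendsto.comp h
  refine le_of_tendsto hlim ((eventually_gt_atTop 0).mono fun t ht => ?_)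
  calc ((⟪u, y⟫ + C / t : ℝ) : EReal)
      = ((t⁻¹ : ℝ) : EReal) * (((⟪x₀ + t • u, y⟫ - β : ℝ) : EReal) - a) := by
        rw [← EReal.coe_sub, ← EReal.coe_mul, inner_add_left, real_inner_smul_left]
        congr 1
        field_simp
        ring
    _ ≤ ((t⁻¹ : ℝ) : EReal) * (f (x₀ + t • u) - f x₀) := by
        rw [h₀]
        gcongr
        exact EReal.sub_le_sub (hmin _) le_rfl
    _ ≤ recAt f x₀ u := le_recAt f x₀ u ht

lemma inner_eq_of_recAt_eq {y : X} {β : ℝ}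
    (hmin : ∀ p, ((⟪p, y⟫ - β : ℝ) : EReal) ≤ f p) {x₀ : X} {a : ℝ} (h₀ : f x₀ = a) {u : X}
    {κ : ℝ} (hu : recAt f x₀ u = κ) (hnu : recAt f x₀ (-u) = ((-κ : ℝ) : EReal)) :
    ⟪u, y⟫ = κ := by
  have h₁ := inner_le_recAt hmin h₀ u
  have h₂ := inner_le_recAt hmin h₀ (-u)
  rw [hu, EReal.coe_le_coe_iff] at h₁
  rw [hnu, EReal.coe_le_coe_iff, inner_neg_left] at h₂
  linarith

lemma inner_eq_of_mem_qri {A : Set X} {q u : X} (hq : q ∈ qri A)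
    (h : ∀ y ∈ A, ⟪u, y⟫ ≤ ⟪u, q⟫) : ∀ y ∈ A, ⟪u, y⟫ = ⟪u, q⟫ := by
  obtain ⟨-, S, hS⟩ := hq
  have hS_nonpos : ∀ x ∈ (S : Set X), ⟪u, x⟫ ≤ 0 := by
    rw [← hS]
    refine closure_minimal ?_ (isClosed_le (continuous_const.inner continuous_id)
      continuous_const : IsClosed {x | ⟪u, x⟫ ≤ 0})
    rintro _ ⟨t, ht, b, hb, rfl⟩
    show ⟪u, t • (b - q)⟫ ≤ 0
    rw [real_inner_smul_right, inner_sub_right]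
    exact mul_nonpos_of_nonneg_of_nonpos ht (sub_nonpos.mpr (h b hb))
  intro y hy
  have hyS : y - q ∈ (S : Set X) := by
    rw [← hS]
    exact subset_closure ⟨1, zero_le_one, y, hy, (one_smul ℝ _).symm⟩
  have h₁ := hS_nonpos _ hyS
  have h₂ := hS_nonpos _ (S.neg_mem hyS)
  rw [inner_neg_right, inner_sub_right] at h₂
  rw [inner_sub_right] at h₁
  linarith

lemma mem_orthogonal_vectorSpan_of_inner_eq {s : Set X} {u : X} {κ : ℝ}
    (h : ∀ y ∈ s, ⟪u, y⟫ = κ) : u ∈ (vectorSpan ℝ s)ᗮ := by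
  have hle : vectorSpan ℝ s ≤ (ℝ ∙ u)ᗮ := by
    rw [vectorSpan_def, Submodule.span_le]
    rintro _ ⟨y, hy, y', hy', rfl⟩
    simp only [SetLike.mem_coe, Submodule.mem_orthogonal_singleton_iff_inner_left, vsub_eq_sub]
    rw [real_inner_comm, inner_sub_right, h y hy, h y' hy', sub_self]
  exact (Submodule.mem_orthogonal _ u).mpr fun v hv =>
    Submodule.mem_orthogonal_singleton_iff_inner_left.mp (hle hv)

lemma inner_eq_of_mem_orthogonal_vectorSpan {s : Set X} {u y p : X}
    (hu : u ∈ (vectorSpan ℝ s)ᗮ) (hy : y ∈ closure s) (hp : p ∈ closure s) :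
    ⟪u, y⟫ = ⟪u, p⟫ := by
  obtain ⟨y₀, hy₀⟩ := closure_nonempty_iff.mp ⟨p, hp⟩
  have hs : ∀ y' ∈ s, ⟪u, y'⟫ = ⟪u, y₀⟫ := fun y' hy' => by
    have := (Submodule.mem_orthogonal' _ u).mp hu _ (vsub_mem_vectorSpan ℝ hy' hy₀)
    rw [vsub_eq_sub, inner_sub_right] at this
    linarith
  have hcl : closure s ⊆ {y' | ⟪u, y'⟫ = ⟪u, y₀⟫} :=
    closure_minimal hs (isClosed_eq (continuous_const.inner continuous_id) continuous_const)
  rw [hcl hy, hcl hp]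

lemma dirCoercive_of_forall_exists_inner_lt (K : Submodule ℝ X) (w : K)
    (h : ∀ u : K, u ≠ 0 → ∃ y ∈ hDomConj f, ⟪(u : X), w⟫ < ⟪(u : X), y⟫) :
    DirCoercive (fun z : K => f z - ((⟪z, w⟫ : ℝ) : EReal)) := by
  intro z u hu
  obtain ⟨y, hy, hlt⟩ := h u hu
  obtain ⟨β, hmin⟩ := mem_hDomConj_iff.mp hy
  refine EReal.tendsto_top_of_coe_add_mul_le (a := ⟪(z : X), y⟫ - β - ⟪(z : X), w⟫)
    (sub_pos.mpr hlt) (Eventually.of_forall fun t => ?_)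
  calc ((⟪(z : X), y⟫ - β - ⟪(z : X), w⟫ + t * (⟪(u : X), y⟫ - ⟪(u : X), w⟫) : ℝ) : EReal)
      = ((⟪((z + t • u : K) : X), y⟫ - β : ℝ) : EReal) - ((⟪z + t • u, w⟫ : ℝ) : EReal) := by
        rw [← EReal.coe_sub]
        congr 1
        rw [Submodule.coe_inner, Submodule.coe_add, Submodule.coe_smul, inner_add_left,
          inner_add_left, real_inner_smul_left, real_inner_smul_left]
        ring
    _ ≤ f (z + t • u : K) - ((⟪z + t • u, w⟫ : ℝ) : EReal) := EReal.sub_le_sub (hmin _) le_rfl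

-- The paper's `L_f`, defined through `dom f*`; see `GammaFn.linealitySpace_eq_hLSet`.
def linealitySpace (f : X → EReal) : Submodule ℝ X := (vectorSpan ℝ (hDomConj f))ᗮ

lemma mem_linealitySpace_of_recAt_eq {x₀ : X} {a : ℝ} (h₀ : f x₀ = a) {u : X} {κ : ℝ}
    (hu : recAt f x₀ u = κ) (hnu : recAt f x₀ (-u) = ((-κ : ℝ) : EReal)) :
    u ∈ linealitySpace f :=
  mem_orthogonal_vectorSpan_of_inner_eq fun _ hy =>
    (mem_hDomConj_iff.mp hy).elim fun _ hmin => inner_eq_of_recAt_eq hmin h₀ hu hnu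

lemma exists_inner_lt_of_mem_qri {q : X} (hq : q ∈ qri (closure (hDomConj f))) {u : X}
    (hu : u ∈ (linealitySpace f)ᗮ) (hu₀ : u ≠ 0) : ∃ y ∈ hDomConj f, ⟪u, q⟫ < ⟪u, y⟫ := by
  by_contra! h
  have hcl : ∀ y ∈ closure (hDomConj f), ⟪u, y⟫ ≤ ⟪u, q⟫ := fun y hy =>
    closure_minimal h (isClosed_le (continuous_const.inner continuous_id) continuous_const :
      IsClosed {y | ⟪u, y⟫ ≤ ⟪u, q⟫}) hy
  have huL : u ∈ linealitySpace f := mem_orthogonal_vectorSpan_of_inner_eq fun y hy =>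
    inner_eq_of_mem_qri hq hcl y (subset_closure hy)
  exact hu₀ (inner_self_eq_zero.mp (Submodule.inner_right_of_mem_orthogonal huL hu))

namespace GoodTriple

variable {Y : Submodule ℝ X} {c : Yᗮ → EReal} {v : X}

lemma apply_add (hT : GoodTriple f Y c v) {u : X} (hu : u ∈ Y) (x : X) :
    f (x + u) = f x + ((⟪u, v⟫ : ℝ) : EReal) := by
  obtain ⟨-, -, -, -, hdecomp, hf⟩ := hT
  obtain ⟨z, hz⟩ := hdecomp x
  have hxu : x + u - z ∈ Y := by rw [add_sub_right_comm]; exact Y.add_mem hz hu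
  rw [hf _ z hxu, hf x z hz, inner_add_left, EReal.coe_add, add_assoc]

lemma apply_coe (hT : GoodTriple f Y c v) (z : Yᗮ) : c z = f z := by
  obtain ⟨-, -, -, hv, -, hf⟩ := hT
  have h := hf z z (by rw [sub_self]; exact Y.zero_mem)
  rw [Submodule.inner_left_of_mem_orthogonal hv z.2, EReal.coe_zero, add_zero] at h
  exact h.symm

lemma eq_zero_of_apply_smul_add (hT : GoodTriple f Y c v) {u : X} (hu : u ∈ Yᗮ) {κ : ℝ}
    (h : ∀ x, ∀ t : ℝ, f (x + t • u) = f x + ((t * κ : ℝ) : EReal)) : u = 0 := by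
  -- On the line `z₀ + t • u`, `c - ⟪·, w⟫` is affine in `t`, so it cannot tend to `⊤` at both ends.
  by_contra hu₀
  obtain ⟨-, hΓ, ⟨w, hw⟩, -⟩ := id hT
  obtain ⟨z₀, hz₀⟩ := hΓ.1
  obtain ⟨a, ha⟩ : ∃ a : ℝ, c z₀ = a := ⟨_, (EReal.coe_toReal hz₀ (hΓ.2.1 z₀)).symm⟩
  have hline : ∀ t : ℝ, c (z₀ + t • ⟨u, hu⟩) - ((⟪z₀ + t • ⟨u, hu⟩, w⟫ : ℝ) : EReal) =
      ((a - ⟪(z₀ : X), w⟫ + t * (κ - ⟪u, w⟫) : ℝ) : EReal) := by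
    intro t
    rw [hT.apply_coe, Submodule.coe_add, Submodule.coe_smul, h, ← hT.apply_coe, ha,
      Submodule.coe_inner, Submodule.coe_add, Submodule.coe_smul, inner_add_left,
      real_inner_smul_left, ← EReal.coe_add, ← EReal.coe_sub]
    congr 1
    ring
  have hu' : (⟨u, hu⟩ : Yᗮ) ≠ 0 := fun h0 => hu₀ (congrArg Subtype.val h0)
  refine EReal.not_tendsto_top_of_add_mul_of_sub_mul (a - ⟪(z₀ : X), w⟫) (κ - ⟪u, w⟫)
    ((hw z₀ _ hu').congr hline) ((hw z₀ _ (neg_ne_zero.mpr hu')).congr fun t => ?_)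
  dsimp only
  rw [smul_neg, ← neg_smul, hline]
  congr 1
  ring

lemma le_linealitySpace (hf : GammaFn f) (hT : GoodTriple f Y c v) : Y ≤ linealitySpace f := by
  intro u hu
  obtain ⟨x₀, hx₀⟩ := hf.1
  obtain ⟨a, ha⟩ : ∃ a : ℝ, f x₀ = a := ⟨_, (EReal.coe_toReal hx₀ (hf.2.1 x₀)).symm⟩
  obtain ⟨hrec, hnrec⟩ := recAt_eq_and_recAt_neg_eq_of_apply_smul_add ha fun t => by
    rw [hT.apply_add (Y.smul_mem t hu), ha, real_inner_smul_left, ← EReal.coe_add]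
  exact mem_linealitySpace_of_recAt_eq ha hrec hnrec

end GoodTriple

end InnerProductSpace

section Hilbert

open RealInnerProductSpace

variable {X : Type*} [NormedAddCommGroup X] [InnerProductSpace ℝ X] [CompleteSpace X]

section

variable {f : X → EReal} {ys : X}

lemma GammaFn.exists_separation_s18 (hf : GammaFn f) {x : X} {r : ℝ} (hr : (r : EReal) < f x) :
    ∃ (g : X) (c s : ℝ), 0 ≤ c ∧ ⟪x, g⟫ + r * c < s ∧
      ∀ p (t : ℝ), f p ≤ t → s < ⟪p, g⟫ + t * c := by
  obtain ⟨φ, s, hφx, hφepi⟩ :=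
    geometric_hahn_banach_point_closed hf.2.2.1 hf.2.2.2.isClosed_epigraph_real
      (x := (x, r)) (not_le.mpr hr)
  set g := (InnerProductSpace.toDual ℝ X).symm (φ.comp (ContinuousLinearMap.inl ℝ X ℝ))
  have hφ : ∀ p t, φ (p, t) = ⟪p, g⟫ + t * φ (0, 1) := by
    intro p t
    have hpt : (p, t) = (p, (0 : ℝ)) + t • ((0 : X), (1 : ℝ)) := by simp
    rw [hpt, map_add, map_smul, smul_eq_mul, mul_comm, real_inner_comm,
      InnerProductSpace.toDual_symm_apply]
    rfl
  have hepi : ∀ p (t : ℝ), f p ≤ t → s < ⟪p, g⟫ + t * φ (0, 1) :=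
    fun p t hpt => hφ p t ▸ hφepi (p, t) hpt
  refine ⟨g, φ (0, 1), s, ?_, hφ x r ▸ hφx, hepi⟩
  obtain ⟨p₀, hp₀⟩ := hf.1
  obtain ⟨a₀, ha₀, -⟩ := EReal.lt_iff_exists_real_btwn.mp (lt_top_iff_ne_top.mpr hp₀)
  by_contra! hneg
  set t := max a₀ ((s - ⟪p₀, g⟫) / φ (0, 1))
  have h₁ := hepi p₀ t (ha₀.le.trans (EReal.coe_le_coe_iff.mpr (le_max_left _ _)))
  have h₂ : t * φ (0, 1) ≤ (s - ⟪p₀, g⟫) / φ (0, 1) * φ (0, 1) :=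
    mul_le_mul_of_nonpos_right (le_max_right _ _) hneg.le
  rw [div_mul_cancel₀ _ hneg.ne] at h₂
  linarith

lemma GammaFn.exists_minorant_gt (hf : GammaFn f) {y₀ : X} (hy₀ : y₀ ∈ hDomConj f) {x : X}
    {r : ℝ} (hr : (r : EReal) < f x) :
    ∃ (y : X) (β : ℝ), (∀ p, ((⟪p, y⟫ - β : ℝ) : EReal) ≤ f p) ∧ r < ⟪x, y⟫ - β := by
  obtain ⟨β₀, hβ₀⟩ := mem_hDomConj_iff.mp hy₀
  obtain ⟨g, c, s, hc, hx, hepi⟩ := hf.exists_separation_s18 hr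
  -- Tilting the separating hyperplane by the minorant `⟪·, y₀⟫ - β₀` makes it non-vertical.
  set K := r - (⟪x, y₀⟫ - β₀)
  set l := (|K| + 1) / (s - ⟪x, g⟫ - r * c)
  have hD : 0 < s - ⟪x, g⟫ - r * c := by linarith
  have hl : l * (s - ⟪x, g⟫ - r * c) = |K| + 1 := div_mul_cancel₀ _ hD.ne'
  have hl₀ : 0 ≤ l := by positivity
  set c' := l * c + 1
  set g' := l • g - y₀
  set s' := l * s - β₀
  have hc' : 0 < c' := by positivity
  have hepi' : ∀ p (t : ℝ), f p ≤ t → s' ≤ ⟪p, g'⟫ + t * c' := by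
    intro p t hpt
    have h₁ := (hepi p t hpt).le
    have h₂ : ⟪p, y₀⟫ - β₀ ≤ t := EReal.coe_le_coe_iff.mp ((hβ₀ p).trans hpt)
    rw [inner_sub_right, real_inner_smul_right]
    nlinarith
  refine ⟨-(c'⁻¹ • g'), -(s' / c'), fun p => ?_, ?_⟩
  · convert EReal.coe_div_le_of_forall_le hc' (hepi' p) using 2
    rw [inner_neg_right, real_inner_smul_right]
    field_simp
    ring
  · have hK := le_abs_self K
    have hx' : r < (s' - ⟪x, g'⟫) / c' := by
      rw [lt_div_iff₀ hc', inner_sub_right, real_inner_smul_right]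
      nlinarith
    convert hx' using 1
    rw [inner_neg_right, real_inner_smul_right]
    field_simp
    ring

lemma GammaFn.apply_add_le (hf : GammaFn f) {y₀ : X} (hy₀ : y₀ ∈ hDomConj f) {u : X} {κ : ℝ}
    (hu : ∀ y ∈ hDomConj f, ⟪u, y⟫ = κ) (x : X) : f (x + u) ≤ f x + κ := by
  rw [← EReal.ge_of_forall_gt_iff_ge]
  intro ρ hρ
  obtain ⟨y, β, hmin, hgt⟩ := hf.exists_minorant_gt hy₀ hρ
  rw [inner_add_left, hu y (mem_hDomConj_iff.mpr ⟨β, hmin⟩)] at hgt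
  calc (ρ : EReal) ≤ ((⟪x, y⟫ - β : ℝ) : EReal) + κ := by
        rw [← EReal.coe_add, EReal.coe_le_coe_iff]; linarith
    _ ≤ f x + κ := add_le_add_left (hmin x) _

lemma GammaFn.apply_add_eq (hf : GammaFn f) {y₀ : X} (hy₀ : y₀ ∈ hDomConj f) {u : X} {κ : ℝ}
    (hu : ∀ y ∈ hDomConj f, ⟪u, y⟫ = κ) (x : X) : f (x + u) = f x + κ := by
  have hnu : ∀ y ∈ hDomConj f, ⟪-u, y⟫ = -κ := fun y hy => by rw [inner_neg_left, hu y hy]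
  have h := hf.apply_add_le hy₀ hnu (x + u)
  rw [add_neg_cancel_right] at h
  refine le_antisymm (hf.apply_add_le hy₀ hu x) ?_
  calc f x + κ ≤ f (x + u) + ((-κ : ℝ) : EReal) + κ := add_le_add_left h _
    _ = f (x + u) := by rw [add_assoc, ← EReal.coe_add, neg_add_cancel, EReal.coe_zero, add_zero]

instance linealitySpace.instHasOrthogonalProjection (f : X → EReal) :
    (linealitySpace f).HasOrthogonalProjection := by
  unfold linealitySpace; infer_instance

lemma GammaFn.apply_add_of_mem_linealitySpace (hf : GammaFn f) (hys : ys ∈ closure (hDomConj f))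
    {u : X} (hu : u ∈ linealitySpace f) (x : X) : f (x + u) = f x + ((⟪u, ys⟫ : ℝ) : EReal) := by
  obtain ⟨y₀, hy₀⟩ := closure_nonempty_iff.mp ⟨ys, hys⟩
  exact hf.apply_add_eq hy₀
    (fun y hy => inner_eq_of_mem_orthogonal_vectorSpan hu (subset_closure hy) hys) x

lemma GammaFn.linealitySpace_eq_hLSet (hf : GammaFn f) (hys : ys ∈ closure (hDomConj f))
    {x₀ : X} (hx₀ : f x₀ ≠ ⊤) : (linealitySpace f : Set X) = hLSet f x₀ ys := by
  obtain ⟨a, ha⟩ : ∃ a : ℝ, f x₀ = a := ⟨_, (EReal.coe_toReal hx₀ (hf.2.1 x₀)).symm⟩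
  ext u
  refine ⟨fun hu => recAt_eq_and_recAt_neg_eq_of_apply_smul_add ha fun t => ?_,
    fun ⟨hu, hnu⟩ => mem_orthogonal_vectorSpan_of_inner_eq (κ := ⟪u, ys⟫) fun y hy => ?_⟩
  · rw [hf.apply_add_of_mem_linealitySpace hys ((linealitySpace f).smul_mem t hu), ha,
      real_inner_smul_left, ← EReal.coe_add]
  · obtain ⟨β, hmin⟩ := mem_hDomConj_iff.mp hy
    exact inner_eq_of_recAt_eq hmin ha hu hnu

lemma GammaFn.apply_eq_apply_add_inner (hf : GammaFn f) (hys : ys ∈ closure (hDomConj f))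
    {x z : X} (hz : z ∈ (linealitySpace f)ᗮ) (hxz : x - z ∈ linealitySpace f) :
    f x = f z + ((⟪x, (linealitySpace f).starProjection ys⟫ : ℝ) : EReal) := by
  set L := linealitySpace f
  have h := hf.apply_add_of_mem_linealitySpace hys hxz z
  rw [add_sub_cancel] at h
  rw [h]
  have h₁ := Submodule.inner_right_of_mem_orthogonal hxz (L.sub_starProjection_mem_orthogonal ys)
  have h₂ := Submodule.inner_left_of_mem_orthogonal (L.starProjection_apply_mem ys) hz
  rw [inner_sub_right, inner_sub_left, inner_sub_left] at h₁
  congr 2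
  rw [inner_sub_left]
  linarith

lemma GammaFn.goodTriple_linealitySpace (hf : GammaFn f) (hys : ys ∈ closure (hDomConj f))
    (hqri : (qri (closure (hDomConj f))).Nonempty) :
    GoodTriple f (linealitySpace f) (fun z => f z) ((linealitySpace f).starProjection ys) := by
  set L := linealitySpace f
  have hdecomp : ∀ x : X, ∃ z : Lᗮ, x - (z : X) ∈ L := fun x =>
    ⟨⟨x - L.starProjection x, L.sub_starProjection_mem_orthogonal x⟩, by simp⟩
  have hdom : ∃ z : Lᗮ, f z ≠ ⊤ := by
    obtain ⟨x, hx⟩ := hf.1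
    obtain ⟨z, hz⟩ := hdecomp x
    refine ⟨z, fun htop => hx ?_⟩
    rw [hf.apply_eq_apply_add_inner hys z.2 hz, htop, EReal.top_add_coe]
  obtain ⟨q, hq⟩ := hqri
  have hw : ∀ u : Lᗮ, ⟪(u : X), Lᗮ.starProjection q⟫ = ⟪(u : X), q⟫ := fun u => by
    rw [← Submodule.inner_starProjection_left_eq_right,
      Submodule.starProjection_eq_self_iff.mpr u.2]
  refine ⟨Submodule.isClosed_orthogonal _, hf.comp_subtype _ hdom,
    ⟨⟨_, Lᗮ.starProjection_apply_mem q⟩, dirCoercive_of_forall_exists_inner_lt _ _ fun u hu => ?_⟩,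
    L.starProjection_apply_mem ys, hdecomp, fun x z hxz => hf.apply_eq_apply_add_inner hys z.2 hxz⟩
  rw [hw]
  exact exists_inner_lt_of_mem_qri hq u.2 (by simpa using hu)

lemma sub_mem_orthogonal_linealitySpace (hys : ys ∈ closure (hDomConj f)) {w : X}
    (hw : w ∈ closure (hDomConj f)) :
    w - (linealitySpace f).starProjection ys ∈ (linealitySpace f)ᗮ := by
  rw [← sub_add_sub_cancel w ys]
  refine add_mem ((Submodule.mem_orthogonal _ _).mpr fun u hu => ?_)
    ((linealitySpace f).sub_starProjection_mem_orthogonal ys)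
  rw [inner_sub_right, inner_eq_of_mem_orthogonal_vectorSpan hu hw hys, sub_self]

namespace GoodTriple

variable {Y : Submodule ℝ X} {c : Yᗮ → EReal} {v : X}

lemma linealitySpace_le (hf : GammaFn f) (hys : ys ∈ closure (hDomConj f))
    (hT : GoodTriple f Y c v) : linealitySpace f ≤ Y := by
  intro u hu
  obtain ⟨z, hz⟩ := hT.2.2.2.2.1 u
  have hzL : (z : X) ∈ linealitySpace f := by
    simpa using (linealitySpace f).sub_mem hu (hT.le_linealitySpace hf hz)
  have hz₀ : (z : X) = 0 := hT.eq_zero_of_apply_smul_add z.2 fun x t => by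
    rw [hf.apply_add_of_mem_linealitySpace hys ((linealitySpace f).smul_mem t hzL),
      real_inner_smul_left]
  rwa [hz₀, sub_zero] at hz

lemma eq_linealitySpace (hf : GammaFn f) (hys : ys ∈ closure (hDomConj f))
    (hT : GoodTriple f Y c v) : Y = linealitySpace f :=
  le_antisymm (hT.le_linealitySpace hf) (hT.linealitySpace_le hf hys)

end GoodTriple

lemma GoodTriple.eq_starProjection {c : (linealitySpace f)ᗮ → EReal} {v : X} (hf : GammaFn f)
    (hys : ys ∈ closure (hDomConj f)) (hT : GoodTriple f (linealitySpace f) c v) :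
    v = (linealitySpace f).starProjection ys := by
  obtain ⟨x₀, hx₀⟩ := hf.1
  obtain ⟨a, ha⟩ : ∃ a : ℝ, f x₀ = a := ⟨_, (EReal.coe_toReal hx₀ (hf.2.1 x₀)).symm⟩
  refine (Submodule.eq_starProjection_of_mem_of_inner_eq_zero hT.2.2.2.1 fun u hu => ?_).symm
  have h := (hT.apply_add hu x₀).symm.trans (hf.apply_add_of_mem_linealitySpace hys hu x₀)
  rw [ha, ← EReal.coe_add, ← EReal.coe_add, EReal.coe_eq_coe_iff] at h
  rw [inner_sub_left, real_inner_comm u ys, real_inner_comm u v]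
  linarith

end

theorem stmt18
    (f : X → EReal) (hf : GammaFn f) (x₀ : X) (hx₀ : f x₀ ≠ ⊤)
    (ys : X) (hys : ys ∈ closure (hDomConj f))
    (hqri : (qri (closure (hDomConj f))).Nonempty) :
    ∃ Y : Submodule ℝ X, ∃ c : ↥(Yᗮ) → EReal, ∃ v : X,
      GoodTriple f Y c v ∧
      (∀ Y' : Submodule ℝ X, ∀ c' : ↥(Y'ᗮ) → EReal, ∀ v' : X,
        GoodTriple f Y' c' v' → Y' = Y ∧ v' = v ∧ HEq c' c) ∧
      (Y : Set X) = hLSet f x₀ ys ∧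
      (∀ z : ↥(Yᗮ), c z = f (z : X)) ∧
      (∀ w ∈ closure (hDomConj f), w - v ∈ Yᗮ) := by
  refine ⟨linealitySpace f, fun z => f z, (linealitySpace f).starProjection ys,
    hf.goodTriple_linealitySpace hys hqri, ?_, hf.linealitySpace_eq_hLSet hys hx₀, fun _ => rfl,
    fun _ hw => sub_mem_orthogonal_linealitySpace hys hw⟩
  intro Y' c' v' hT
  obtain rfl := hT.eq_linealitySpace hf hys
  exact ⟨rfl, hT.eq_starProjection hf hys, heq_of_eq (funext hT.apply_coe)⟩

end Hilbert
end
end
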